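/- arXiv:1704.02419 — 2 statements merged into one kernel-verified Lean document; each statement's English description precedes it below -/
import Mathlib

section
/- Suppose H : ℝⁿ → ℝ is smooth with H(x) ≥ c₀ > 0. Define operators L₁₁ψ = -∇·(H∇ψ), L₁₂ψ = -∇·((1/3)H³∇ψ), L₂₂ψ = -δ²∇·((1/5)H⁵∇ψ) + (4/3)H³ψ, and L₁ψ = δ²(H²L₁₁ - L₁₂)(H²ψ) + (L₂₂ - δ²H²L₁₂)ψ. Then there exists C = C(c₀) > 0 such that for all Schwartz functions ψ₁, ⟨L₁ψ₁, ψ₁⟩_{L²} ≥ C⁻¹(‖ψ₁‖² + δ²‖∇ψ₁‖²). -/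
open MeasureTheory RealInnerProductSpace

noncomputable section

/-- Partial derivative in the `i`-th coordinate direction. -/
def pd (n : ℕ) (i : Fin n) (f : EuclideanSpace ℝ (Fin n) → ℝ) :
    EuclideanSpace ℝ (Fin n) → ℝ :=
  fun x => fderiv ℝ f x (EuclideanSpace.single i 1)

/-- Gradient of a scalar function on ℝⁿ. -/
def grad (n : ℕ) (f : EuclideanSpace ℝ (Fin n) → ℝ) :
    EuclideanSpace ℝ (Fin n) → EuclideanSpace ℝ (Fin n) :=
  fun x => (WithLp.equiv 2 (Fin n → ℝ)).symm fun i => pd n i f x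

/-- Divergence of a vector field on ℝⁿ. -/
def divg (n : ℕ) (v : EuclideanSpace ℝ (Fin n) → EuclideanSpace ℝ (Fin n)) :
    EuclideanSpace ℝ (Fin n) → ℝ :=
  fun x => ∑ i, fderiv ℝ (fun y => (WithLp.equiv 2 (Fin n → ℝ)) (v y) i) x
    (EuclideanSpace.single i 1)

/-- Laplacian of a scalar function on ℝⁿ. -/
def lap (n : ℕ) (f : EuclideanSpace ℝ (Fin n) → ℝ) :
    EuclideanSpace ℝ (Fin n) → ℝ :=
  fun x => ∑ i, pd n i (pd n i f) x

end

noncomputable section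

/-- `L₁₁ψ = -∇·(H∇ψ)`. -/
def L11 (n : ℕ) (H ψ : EuclideanSpace ℝ (Fin n) → ℝ) : EuclideanSpace ℝ (Fin n) → ℝ :=
  fun x => -divg n (fun y => H y • grad n ψ y) x

/-- `L₁₂ψ = -∇·((1/3)H³∇ψ)`. -/
def L12 (n : ℕ) (H ψ : EuclideanSpace ℝ (Fin n) → ℝ) : EuclideanSpace ℝ (Fin n) → ℝ :=
  fun x => -divg n (fun y => ((1/3) * (H y)^3) • grad n ψ y) x

/-- `L₂₂ψ = -δ²∇·((1/5)H⁵∇ψ) + (4/3)H³ψ`. -/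
def L22 (n : ℕ) (δ : ℝ) (H ψ : EuclideanSpace ℝ (Fin n) → ℝ) :
    EuclideanSpace ℝ (Fin n) → ℝ :=
  fun x => -(δ^2) * divg n (fun y => ((1/5) * (H y)^5) • grad n ψ y) x + (4/3) * (H x)^3 * ψ x

/-- `L₁ψ = δ²(H²L₁₁ - L₁₂)(H²ψ) + (L₂₂ - δ²H²L₁₂)ψ`. -/
def L1op (n : ℕ) (δ : ℝ) (H ψ : EuclideanSpace ℝ (Fin n) → ℝ) :
    EuclideanSpace ℝ (Fin n) → ℝ :=
  fun x => δ^2 * ((H x)^2 * L11 n H (fun y => (H y)^2 * ψ y) x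
      - L12 n H (fun y => (H y)^2 * ψ y) x)
    + (L22 n δ H ψ x - δ^2 * (H x)^2 * L12 n H ψ x)

end

noncomputable section
open SchwartzMap
variable {n : ℕ}
local notation "E" => EuclideanSpace ℝ (Fin n)
abbrev Sch (n : ℕ) := SchwartzMap (EuclideanSpace ℝ (Fin n)) ℝ

lemma schwartz_tg (f : Sch n) : Function.HasTemperateGrowth (⇑f) := by
  refine ⟨f.smooth ⊤, fun m => ⟨0, ?_⟩⟩
  obtain ⟨C, hC⟩ := f.decay 0 m
  exact ⟨C, fun x => by simpa using (hC.2 x).trans (le_of_eq (by ring))⟩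

def mulS (F G : Sch n) : Sch n :=
  SchwartzMap.bilinLeftCLM (ContinuousLinearMap.mul ℝ ℝ) (schwartz_tg G) F

@[simp] lemma mulS_apply (F G : Sch n) (x : E) : mulS F G x = F x * G x := rfl

lemma mulS_integrable (F G : Sch n) : Integrable (fun x => F x * G x) :=
  (mulS F G).integrable (μ := volume)

/-- `pd` of a Schwartz function is (the coercion of) a Schwartz function. -/
lemma pd_schwartz (i : Fin n) (F : Sch n) :
    pd n i ⇑F = ⇑(LineDeriv.lineDerivOp (EuclideanSpace.single i (1:ℝ)) F) := by
  funext x; simp [pd, SchwartzMap.lineDerivOp_apply_eq_fderiv]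

/-- Core integration by parts for Schwartz functions. -/
lemma ibp_core (i : Fin n) (F G : Sch n) :
    ∫ x, pd n i (⇑F) x * G x = - ∫ x, F x * pd n i (⇑G) x := by
  have h := integral_mul_fderiv_eq_neg_fderiv_mul_of_integrable
    (μ := (volume : Measure E)) (f := ⇑F) (g := ⇑G) (v := EuclideanSpace.single i 1)
    ?_ ?_ ?_ (fun x _ => F.differentiableAt) (fun x _ => G.differentiableAt)
  · simp only [pd]
    linarith [h]
  · have : (fun x => fderiv ℝ (⇑F) x (EuclideanSpace.single i 1) * G x)
        = fun x => (LineDeriv.lineDerivOp (EuclideanSpace.single i (1:ℝ)) F) x * G x := by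
      funext x; rw [SchwartzMap.lineDerivOp_apply_eq_fderiv]
    rw [this]; exact mulS_integrable _ _
  · have : (fun x => F x * fderiv ℝ (⇑G) x (EuclideanSpace.single i 1))
        = fun x => F x * (LineDeriv.lineDerivOp (EuclideanSpace.single i (1:ℝ)) G) x := by
      funext x; rw [SchwartzMap.lineDerivOp_apply_eq_fderiv]
    rw [this]; exact mulS_integrable _ _
  · exact mulS_integrable F G

/-- Representation of the weighted divergence through Schwartz functions. -/
lemma divg_eq {a : (E) → ℝ}
    (hmul : ∀ F : Sch n, ∃ G : Sch n, ∀ x, G x = a x * F x) (φ : Sch n) :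
    ∃ g : Fin n → Sch n,
      (∀ i x, g i x = a x * pd n i (⇑φ) x) ∧
      ∀ x, divg n (fun y => a y • grad n (⇑φ) y) x = ∑ i, pd n i ⇑(g i) x := by
  choose g hg using fun (i : Fin n) => hmul (LineDeriv.lineDerivOp (EuclideanSpace.single i (1:ℝ)) φ)
  have hg' : ∀ i x, g i x = a x * pd n i (⇑φ) x := by
    intro i x; rw [hg i x, pd_schwartz]
  refine ⟨g, hg', fun x => ?_⟩
  unfold divg
  refine Finset.sum_congr rfl fun i _ => ?_
  have hfun : (fun y => (WithLp.equiv 2 (Fin n → ℝ)) (a y • grad n (⇑φ) y) i) = ⇑(g i) := by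
    funext y
    rw [hg' i y]
    simp [grad, WithLp.ofLp_smul]
  rw [hfun]; rfl

/-- Weighted integration by parts: `∫ (-∇·(a∇φ)) χ = ∫ a ∇φ·∇χ`. -/
lemma ibp_weighted {a : (E) → ℝ}
    (hmul : ∀ F : Sch n, ∃ G : Sch n, ∀ x, G x = a x * F x) (φ χ : Sch n) :
    ∫ x, (-divg n (fun y => a y • grad n (⇑φ) y) x) * χ x
      = ∫ x, a x * ∑ i, pd n i (⇑φ) x * pd n i (⇑χ) x := by
  obtain ⟨g, hgx, hdiv⟩ := divg_eq hmul φ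
  have key : ∀ i : Fin n, ∫ x, (-(pd n i ⇑(g i) x)) * χ x = ∫ x, g i x * pd n i (⇑χ) x := by
    intro i
    rw [show (fun x => (-(pd n i ⇑(g i) x)) * χ x) = fun x => -(pd n i ⇑(g i) x * χ x) by
      funext x; ring]
    rw [integral_neg, ibp_core i (g i) χ, neg_neg]
  calc ∫ x, (-divg n (fun y => a y • grad n (⇑φ) y) x) * χ x
      = ∫ x, ∑ i, (-(pd n i ⇑(g i) x)) * χ x := by
        congr 1; funext x; rw [hdiv x]
        rw [← Finset.sum_neg_distrib, Finset.sum_mul]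
    _ = ∑ i, ∫ x, (-(pd n i ⇑(g i) x)) * χ x := by
        refine integral_finset_sum _ fun i _ => ?_
        have : (fun x => (-(pd n i ⇑(g i) x)) * χ x)
            = fun x => -((LineDeriv.lineDerivOp (EuclideanSpace.single i (1:ℝ)) (g i)) x * χ x) := by
          funext x; rw [pd_schwartz]; ring
        rw [this]; exact (mulS_integrable _ _).neg
    _ = ∑ i, ∫ x, g i x * pd n i (⇑χ) x := by exact Finset.sum_congr rfl fun i _ => key i
    _ = ∫ x, ∑ i, g i x * pd n i (⇑χ) x := by
        refine (integral_finset_sum _ fun i _ => ?_).symm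
        have : (fun x => g i x * pd n i (⇑χ) x)
            = fun x => g i x * (LineDeriv.lineDerivOp (EuclideanSpace.single i (1:ℝ)) χ) x := by
          funext x; rw [pd_schwartz]
        rw [this]; exact mulS_integrable _ _
    _ = ∫ x, a x * ∑ i, pd n i (⇑φ) x * pd n i (⇑χ) x := by
        congr 1; funext x
        rw [Finset.mul_sum]
        exact Finset.sum_congr rfl fun i _ => by rw [hgx i x]; ring

/-- Multiplication by `c * H^k` preserves Schwartz, given `H` of temperate growth. -/
lemma hmul_pow {H : (E) → ℝ} (ha : H.HasTemperateGrowth) (c : ℝ) (k : ℕ) :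
    ∀ F : Sch n, ∃ G : Sch n, ∀ x, G x = (c * (H x)^k) * F x := by
  have base : ∀ k : ℕ, ∀ F : Sch n, ∃ G : Sch n, ∀ x, G x = (H x)^k * F x := by
    intro k
    induction k with
    | zero => exact fun F => ⟨F, fun x => by simp⟩
    | succ m ih =>
      intro F
      obtain ⟨G, hG⟩ := ih F
      exact ⟨SchwartzMap.bilinLeftCLM (ContinuousLinearMap.mul ℝ ℝ) ha G,
        fun x => by
          have : (SchwartzMap.bilinLeftCLM (ContinuousLinearMap.mul ℝ ℝ) ha G) x
              = G x * H x := rfl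
          rw [this, hG x]; ring⟩
  intro F
  obtain ⟨G, hG⟩ := base k F
  exact ⟨c • G, fun x => by rw [SchwartzMap.smul_apply, hG x]; simp; ring⟩

lemma divg_mul_integrable {a : (E) → ℝ}
    (hmul : ∀ F : Sch n, ∃ G : Sch n, ∀ x, G x = a x * F x) (φ χ : Sch n) :
    Integrable (fun x => (-divg n (fun y => a y • grad n (⇑φ) y) x) * χ x) := by
  obtain ⟨g, hgx, hdiv⟩ := divg_eq hmul φ
  have : (fun x => (-divg n (fun y => a y • grad n (⇑φ) y) x) * χ x)
      = fun x => ∑ i, -((LineDeriv.lineDerivOp (EuclideanSpace.single i (1:ℝ)) (g i)) x * χ x) := by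
    funext x; rw [hdiv x, neg_mul, Finset.sum_mul, ← Finset.sum_neg_distrib]
    exact Finset.sum_congr rfl fun i _ => by rw [pd_schwartz]
  rw [this]
  exact integrable_finset_sum _ fun i _ => (mulS_integrable _ _).neg

lemma wgrad_integrable {a : (E) → ℝ}
    (hmul : ∀ F : Sch n, ∃ G : Sch n, ∀ x, G x = a x * F x) (φ χ : Sch n) :
    Integrable (fun x => a x * ∑ i, pd n i (⇑φ) x * pd n i (⇑χ) x) := by
  obtain ⟨g, hgx, _⟩ := divg_eq hmul φ
  have : (fun x => a x * ∑ i, pd n i (⇑φ) x * pd n i (⇑χ) x)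
      = fun x => ∑ i, (g i) x * (LineDeriv.lineDerivOp (EuclideanSpace.single i (1:ℝ)) χ) x := by
    funext x
    rw [Finset.mul_sum]
    refine Finset.sum_congr rfl fun i _ => ?_
    rw [hgx i x, ← pd_schwartz]; ring
  rw [this]
  exact integrable_finset_sum _ fun i _ => mulS_integrable _ _

lemma norm_grad_sq (f : (E) → ℝ) (x : E) :
    ‖grad n f x‖^2 = ∑ i, (pd n i f x)^2 := by
  rw [EuclideanSpace.norm_eq, Real.sq_sqrt (by positivity)]
  refine Finset.sum_congr rfl fun i _ => ?_
  simp [grad, Real.norm_eq_abs, sq_abs]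

end

set_option maxHeartbeats 1000000

/-- Coercivity of the elliptic operator `L₁`: there is a constant `C = C(c₀) > 0` such that for
every `δ ∈ (0,1]`, every smooth `H ≥ c₀ > 0` (of temperate growth) and every Schwartz `ψ₁`,
`⟨L₁ψ₁, ψ₁⟩_{L²} ≥ C⁻¹(‖ψ₁‖² + δ²‖∇ψ₁‖²)`. -/
theorem stmt2 (n : ℕ) (c₀ : ℝ) (hc₀ : 0 < c₀) :
    ∃ C : ℝ, 0 < C ∧
      ∀ δ : ℝ, δ ∈ Set.Ioc (0:ℝ) 1 →
        ∀ H : EuclideanSpace ℝ (Fin n) → ℝ, ContDiff ℝ (⊤ : ℕ∞) H →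
          Function.HasTemperateGrowth H → (∀ x, c₀ ≤ H x) →
          ∀ ψ₁ : SchwartzMap (EuclideanSpace ℝ (Fin n)) ℝ,
            (∫ x, L1op n δ H ⇑ψ₁ x * ψ₁ x)
              ≥ C⁻¹ * ((∫ x, (ψ₁ x)^2) + δ^2 * (∫ x, ‖grad n ⇑ψ₁ x‖^2)) := by
  have hc1 : (0:ℝ) < 4/3*c₀^3 := by positivity
  have hc2 : (0:ℝ) < 4/45*c₀^5 := by positivity
  refine ⟨(min (4/3*c₀^3) (4/45*c₀^5))⁻¹, by positivity, ?_⟩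
  intro δ hδ H hH htg hHc ψ
  rw [inv_inv]
  obtain ⟨Φ, hΦ⟩ := hmul_pow (n := n) htg 1 2 ψ
  obtain ⟨W, hW⟩ := hmul_pow (n := n) htg (4/3) 3 ψ
  have hmul1 : ∀ F : Sch n, ∃ G : Sch n, ∀ x, G x = H x * F x := fun F =>
    (hmul_pow htg 1 1 F).imp fun G hG x => by rw [hG x]; ring
  have hmul3 := hmul_pow (n := n) htg (1/3) 3
  have hmul5 := hmul_pow (n := n) htg (1/5) 5
  have Φeq : (fun y => (H y)^2 * ψ y) = ⇑Φ := funext fun y => by rw [hΦ y]; ring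
  -- the five pieces
  set P1 : EuclideanSpace ℝ (Fin n) → ℝ :=
    fun x => (-divg n (fun y => H y • grad n (⇑Φ) y) x) * Φ x with hP1
  set P2 : EuclideanSpace ℝ (Fin n) → ℝ :=
    fun x => (-divg n (fun y => ((1/3) * (H y)^3) • grad n (⇑Φ) y) x) * ψ x with hP2
  set P3 : EuclideanSpace ℝ (Fin n) → ℝ :=
    fun x => (-divg n (fun y => ((1/3) * (H y)^3) • grad n (⇑ψ) y) x) * Φ x with hP3
  set P4 : EuclideanSpace ℝ (Fin n) → ℝ :=
    fun x => (-divg n (fun y => ((1/5) * (H y)^5) • grad n (⇑ψ) y) x) * ψ x with hP4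
  set P0 : EuclideanSpace ℝ (Fin n) → ℝ := fun x => W x * ψ x with hP0
  have int1 : Integrable P1 := divg_mul_integrable hmul1 Φ Φ
  have int2 : Integrable P2 := divg_mul_integrable hmul3 Φ ψ
  have int3 : Integrable P3 := divg_mul_integrable hmul3 ψ Φ
  have int4 : Integrable P4 := divg_mul_integrable hmul5 ψ ψ
  have int0 : Integrable P0 := mulS_integrable W ψ
  -- after-IBP pieces
  set Q1 : EuclideanSpace ℝ (Fin n) → ℝ :=
    fun x => H x * ∑ i, pd n i (⇑Φ) x * pd n i (⇑Φ) x with hQ1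
  set Q2 : EuclideanSpace ℝ (Fin n) → ℝ :=
    fun x => ((1/3) * (H x)^3) * ∑ i, pd n i (⇑Φ) x * pd n i (⇑ψ) x with hQ2
  set Q3 : EuclideanSpace ℝ (Fin n) → ℝ :=
    fun x => ((1/3) * (H x)^3) * ∑ i, pd n i (⇑ψ) x * pd n i (⇑Φ) x with hQ3
  set Q4 : EuclideanSpace ℝ (Fin n) → ℝ :=
    fun x => ((1/5) * (H x)^5) * ∑ i, pd n i (⇑ψ) x * pd n i (⇑ψ) x with hQ4
  have jnt1 : Integrable Q1 := wgrad_integrable hmul1 Φ Φ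
  have jnt2 : Integrable Q2 := wgrad_integrable hmul3 Φ ψ
  have jnt3 : Integrable Q3 := wgrad_integrable hmul3 ψ Φ
  have jnt4 : Integrable Q4 := wgrad_integrable hmul5 ψ ψ
  have ibp1 : ∫ x, P1 x = ∫ x, Q1 x := ibp_weighted hmul1 Φ Φ
  have ibp2 : ∫ x, P2 x = ∫ x, Q2 x := ibp_weighted hmul3 Φ ψ
  have ibp3 : ∫ x, P3 x = ∫ x, Q3 x := ibp_weighted hmul3 ψ Φ
  have ibp4 : ∫ x, P4 x = ∫ x, Q4 x := ibp_weighted hmul5 ψ ψ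
  -- pointwise decomposition of the integrand
  have hsplit : (fun x => L1op n δ H (⇑ψ) x * ψ x)
      = fun x => δ^2 * P1 x - δ^2 * P2 x + δ^2 * P4 x + P0 x - δ^2 * P3 x := by
    funext x
    simp only [L1op, L11, L12, L22, Φeq, hP1, hP2, hP3, hP4, hP0]
    rw [hΦ x, hW x]; ring
  have hGsplit : (fun x => δ^2 * Q1 x - δ^2 * Q2 x + δ^2 * Q4 x + P0 x - δ^2 * Q3 x)
      = fun x => δ^2 * (Q1 x - Q2 x + Q4 x - Q3 x) + P0 x := by
    funext x; ring
  have intP1 : Integrable (fun x => δ^2 * P1 x) := int1.const_mul _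
  have intP2 : Integrable (fun x => δ^2 * P2 x) := int2.const_mul _
  have intP3 : Integrable (fun x => δ^2 * P3 x) := int3.const_mul _
  have intP4 : Integrable (fun x => δ^2 * P4 x) := int4.const_mul _
  have intA1 : Integrable (fun x => δ^2 * P1 x - δ^2 * P2 x) := intP1.sub intP2
  have intA2 : Integrable (fun x => δ^2 * P1 x - δ^2 * P2 x + δ^2 * P4 x) := intA1.add intP4
  have intA3 : Integrable (fun x => δ^2 * P1 x - δ^2 * P2 x + δ^2 * P4 x + P0 x) :=
    intA2.add int0
  have intQ : Integrable (fun x => Q1 x - Q2 x + Q4 x - Q3 x) :=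
    ((jnt1.sub jnt2).add jnt4).sub jnt3
  have intQ' : Integrable (fun x => δ^2 * (Q1 x - Q2 x + Q4 x - Q3 x)) := intQ.const_mul _
  have intG : Integrable (fun x => δ^2 * (Q1 x - Q2 x + Q4 x - Q3 x) + P0 x) := intQ'.add int0
  have step : (∫ x, L1op n δ H (⇑ψ) x * ψ x)
      = ∫ x, (δ^2 * (Q1 x - Q2 x + Q4 x - Q3 x) + P0 x) := by
    rw [hsplit]
    have e1 : (∫ x, (δ^2 * P1 x - δ^2 * P2 x + δ^2 * P4 x + P0 x - δ^2 * P3 x))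
        = (∫ x, (δ^2 * P1 x - δ^2 * P2 x + δ^2 * P4 x + P0 x)) - ∫ x, δ^2 * P3 x :=
      integral_sub intA3 intP3
    have e2 : (∫ x, (δ^2 * P1 x - δ^2 * P2 x + δ^2 * P4 x + P0 x))
        = (∫ x, (δ^2 * P1 x - δ^2 * P2 x + δ^2 * P4 x)) + ∫ x, P0 x :=
      integral_add intA2 int0
    have e3 : (∫ x, (δ^2 * P1 x - δ^2 * P2 x + δ^2 * P4 x))
        = (∫ x, (δ^2 * P1 x - δ^2 * P2 x)) + ∫ x, δ^2 * P4 x :=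
      integral_add intA1 intP4
    have e4 : (∫ x, (δ^2 * P1 x - δ^2 * P2 x)) = (∫ x, δ^2 * P1 x) - ∫ x, δ^2 * P2 x :=
      integral_sub intP1 intP2
    have f0 : (∫ x, (δ^2 * (Q1 x - Q2 x + Q4 x - Q3 x) + P0 x))
        = (∫ x, δ^2 * (Q1 x - Q2 x + Q4 x - Q3 x)) + ∫ x, P0 x := integral_add intQ' int0
    have f1 : (∫ x, δ^2 * (Q1 x - Q2 x + Q4 x - Q3 x))
        = δ^2 * ∫ x, (Q1 x - Q2 x + Q4 x - Q3 x) := integral_const_mul _ _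
    have f2 : (∫ x, (Q1 x - Q2 x + Q4 x - Q3 x))
        = (∫ x, (Q1 x - Q2 x + Q4 x)) - ∫ x, Q3 x :=
      integral_sub ((jnt1.sub jnt2).add jnt4) jnt3
    have f3 : (∫ x, (Q1 x - Q2 x + Q4 x)) = (∫ x, (Q1 x - Q2 x)) + ∫ x, Q4 x :=
      integral_add (jnt1.sub jnt2) jnt4
    have f4 : (∫ x, (Q1 x - Q2 x)) = (∫ x, Q1 x) - ∫ x, Q2 x := integral_sub jnt1 jnt2
    have g1 : (∫ x, δ^2 * P1 x) = δ^2 * ∫ x, P1 x := integral_const_mul _ _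
    have g2 : (∫ x, δ^2 * P2 x) = δ^2 * ∫ x, P2 x := integral_const_mul _ _
    have g3 : (∫ x, δ^2 * P3 x) = δ^2 * ∫ x, P3 x := integral_const_mul _ _
    have g4 : (∫ x, δ^2 * P4 x) = δ^2 * ∫ x, P4 x := integral_const_mul _ _
    rw [e1, e2, e3, e4, f0, f1, f2, f3, f4, g1, g2, g3, g4, ibp1, ibp2, ibp3, ibp4]
    ring
  rw [step]
  -- pointwise lower bound
  set R : EuclideanSpace ℝ (Fin n) → ℝ :=
    fun x => (4/3*c₀^3) * (ψ x)^2 + (4/45*c₀^5) * (δ^2 * ∑ i, (pd n i (⇑ψ) x)^2) with hR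
  have intsq : Integrable (fun x => (ψ x)^2) := by
    have h := mulS_integrable ψ ψ
    simpa [sq] using h
  have intb : Integrable (fun x => ∑ i, (pd n i (⇑ψ) x)^2) := by
    refine integrable_finset_sum _ fun i _ => ?_
    have h : (fun x => (pd n i (⇑ψ) x)^2)
        = fun x => (LineDeriv.lineDerivOp (EuclideanSpace.single i (1:ℝ)) ψ) x
            * (LineDeriv.lineDerivOp (EuclideanSpace.single i (1:ℝ)) ψ) x := by
      funext x; rw [pd_schwartz]; ring
    rw [h]; exact mulS_integrable _ _
  have intR : Integrable R :=
    (intsq.const_mul _).add ((intb.const_mul (δ^2)).const_mul _)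
  have key : ∀ x, R x ≤ δ^2 * (Q1 x - Q2 x + Q4 x - Q3 x) + P0 x := by
    intro x
    have hx0 : 0 < H x := lt_of_lt_of_le hc₀ (hHc x)
    have h3 : c₀^3 ≤ H x^3 := pow_le_pow_left₀ hc₀.le (hHc x) 3
    have h5 : c₀^5 ≤ H x^5 := pow_le_pow_left₀ hc₀.le (hHc x) 5
    have hδ2 : (0:ℝ) ≤ δ^2 := sq_nonneg δ
    have hterm : ∀ i ∈ Finset.univ, (4/45*c₀^5) * (pd n i (⇑ψ) x)^2 ≤
        H x * (pd n i (⇑Φ) x * pd n i (⇑Φ) x)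
        - 1/3*(H x)^3 * (pd n i (⇑Φ) x * pd n i (⇑ψ) x)
        + 1/5*(H x)^5 * (pd n i (⇑ψ) x * pd n i (⇑ψ) x)
        - 1/3*(H x)^3 * (pd n i (⇑ψ) x * pd n i (⇑Φ) x) := by
      intro i _
      nlinarith [mul_nonneg hx0.le
          (sq_nonneg (pd n i (⇑Φ) x - (H x)^2 * pd n i (⇑ψ) x / 3)),
        mul_nonneg (sub_nonneg.2 h5) (sq_nonneg (pd n i (⇑ψ) x))]
    have hQge : (4/45*c₀^5) * ∑ i, (pd n i (⇑ψ) x)^2 ≤ Q1 x - Q2 x + Q4 x - Q3 x := by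
      calc (4/45*c₀^5) * ∑ i, (pd n i (⇑ψ) x)^2
          = ∑ i, (4/45*c₀^5) * (pd n i (⇑ψ) x)^2 := Finset.mul_sum _ _ _
        _ ≤ ∑ i, (H x * (pd n i (⇑Φ) x * pd n i (⇑Φ) x)
            - 1/3*(H x)^3 * (pd n i (⇑Φ) x * pd n i (⇑ψ) x)
            + 1/5*(H x)^5 * (pd n i (⇑ψ) x * pd n i (⇑ψ) x)
            - 1/3*(H x)^3 * (pd n i (⇑ψ) x * pd n i (⇑Φ) x)) := Finset.sum_le_sum hterm
        _ = Q1 x - Q2 x + Q4 x - Q3 x := by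
            simp only [hQ1, hQ2, hQ3, hQ4]
            rw [Finset.sum_sub_distrib, Finset.sum_add_distrib, Finset.sum_sub_distrib,
              ← Finset.mul_sum, ← Finset.mul_sum, ← Finset.mul_sum, ← Finset.mul_sum]
    have hP0x : P0 x = 4/3 * (H x)^3 * ψ x * ψ x := by
      simp only [hP0]; rw [hW x]
    have hP0ge : (4/3*c₀^3) * (ψ x)^2 ≤ P0 x := by
      rw [hP0x]
      nlinarith [mul_le_mul_of_nonneg_right h3 (sq_nonneg (ψ x))]
    have hmul' := mul_le_mul_of_nonneg_left hQge hδ2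
    have hcomm : (4/45*c₀^5) * (δ^2 * ∑ i, (pd n i (⇑ψ) x)^2)
        = δ^2 * ((4/45*c₀^5) * ∑ i, (pd n i (⇑ψ) x)^2) := by ring
    simp only [hR]
    linarith [hmul', hP0ge, hcomm.le, hcomm.ge]
  have intG' : Integrable (fun x => δ^2 * (Q1 x - Q2 x + Q4 x - Q3 x) + P0 x) := intG
  have mono : (∫ x, R x) ≤ ∫ x, (δ^2 * (Q1 x - Q2 x + Q4 x - Q3 x) + P0 x) :=
    integral_mono intR intG' key
  have eR : (∫ x, R x) = (4/3*c₀^3) * (∫ x, (ψ x)^2)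
      + (4/45*c₀^5) * (δ^2 * ∫ x, ∑ i, (pd n i (⇑ψ) x)^2) := by
    simp only [hR]
    rw [integral_add (intsq.const_mul _) ((intb.const_mul (δ^2)).const_mul _),
      integral_const_mul, integral_const_mul, integral_const_mul]
  have hnorm : (∫ x, ‖grad n (⇑ψ) x‖^2) = ∫ x, ∑ i, (pd n i (⇑ψ) x)^2 := by
    congr 1; funext x; exact norm_grad_sq _ x
  have hA : 0 ≤ ∫ x, (ψ x)^2 := integral_nonneg fun x => sq_nonneg _
  have hB : 0 ≤ ∫ x, ∑ i, (pd n i (⇑ψ) x)^2 :=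
    integral_nonneg fun x => Finset.sum_nonneg fun i _ => sq_nonneg _
  rw [ge_iff_le, hnorm]
  refine le_trans ?_ (le_trans (le_of_eq eR.symm) mono)
  have h1 : min (4/3*c₀^3) (4/45*c₀^5) * (∫ x, (ψ x)^2) ≤ (4/3*c₀^3) * ∫ x, (ψ x)^2 :=
    mul_le_mul_of_nonneg_right (min_le_left _ _) hA
  have h2 : min (4/3*c₀^3) (4/45*c₀^5) * (δ^2 * ∫ x, ∑ i, (pd n i (⇑ψ) x)^2)
      ≤ (4/45*c₀^5) * (δ^2 * ∫ x, ∑ i, (pd n i (⇑ψ) x)^2) :=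
    mul_le_mul_of_nonneg_right (min_le_right _ _) (mul_nonneg (sq_nonneg δ) hB)
  have hexp : min (4/3*c₀^3) (4/45*c₀^5) * ((∫ x, (ψ x)^2)
      + δ^2 * ∫ x, ∑ i, (pd n i (⇑ψ) x)^2)
      = min (4/3*c₀^3) (4/45*c₀^5) * (∫ x, (ψ x)^2)
      + min (4/3*c₀^3) (4/45*c₀^5) * (δ^2 * ∫ x, ∑ i, (pd n i (⇑ψ) x)^2) := by ring
  linarith [h1, h2]
end

section
/- With H : ℝⁿ → ℝ smooth and positive and the operators L₁₁ψ = -∇·(H∇ψ), L₁₂ψ = -∇·((1/3)H³∇ψ), L₂₂ψ = -δ²∇·((1/5)H⁵∇ψ) + (4/3)H³ψ, the following bilinear identity holds for all Schwartz functions ψ₀, ψ₁: ⟨L₁₁ψ₀ + δ²L₁₂ψ₁, ψ₀⟩_{L²} + ⟨δ²L₁₂ψ₀ + δ²L₂₂ψ₁, ψ₁⟩_{L²} = ∫_{ℝⁿ}∫₀^{H(x)} (|∇ψ₀(x) + δ²z²∇ψ₁(x)|² + (2δ z ψ₁(x))²) dz dx. -/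
open MeasureTheory RealInnerProductSpace

/-! ### Auxiliary lemmas -/

noncomputable section Aux

section TG

variable {W : Type*} [NormedAddCommGroup W] [NormedSpace ℝ W]

lemma myTG.mul {f g : W → ℝ} (hf : f.HasTemperateGrowth) (hg : g.HasTemperateGrowth) :
    Function.HasTemperateGrowth (fun x => f x * g x) := by
  refine ⟨hf.1.mul hg.1, fun m => ?_⟩
  obtain ⟨k₁, C₁, hC₁, h₁⟩ := hf.norm_iteratedFDeriv_le_uniform m
  obtain ⟨k₂, C₂, hC₂, h₂⟩ := hg.norm_iteratedFDeriv_le_uniform m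
  refine ⟨k₁ + k₂, (∑ i ∈ Finset.range (m+1), (m.choose i : ℝ)) * (C₁ * C₂), fun x => ?_⟩
  calc ‖iteratedFDeriv ℝ m (fun y => f y * g y) x‖
      ≤ ∑ i ∈ Finset.range (m + 1),
          (m.choose i : ℝ) * ‖iteratedFDeriv ℝ i f x‖ * ‖iteratedFDeriv ℝ (m - i) g x‖ :=
        norm_iteratedFDeriv_mul_le hf.1 hg.1 x (by exact_mod_cast le_top)
    _ ≤ ∑ i ∈ Finset.range (m + 1),
          (m.choose i : ℝ) * ((C₁ * C₂) * (1 + ‖x‖) ^ (k₁ + k₂)) := by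
        refine Finset.sum_le_sum fun i hi => ?_
        rw [Finset.mem_range] at hi
        have hx : (0:ℝ) ≤ 1 + ‖x‖ := by positivity
        rw [mul_assoc]
        refine mul_le_mul_of_nonneg_left ?_ (by positivity)
        have := mul_le_mul (h₁ i (by omega) x) (h₂ (m - i) (by omega) x)
          (norm_nonneg _) (by positivity)
        calc ‖iteratedFDeriv ℝ i f x‖ * ‖iteratedFDeriv ℝ (m-i) g x‖
            ≤ (C₁ * (1+‖x‖)^k₁) * (C₂ * (1+‖x‖)^k₂) := this
          _ = C₁ * C₂ * (1+‖x‖)^(k₁+k₂) := by rw [pow_add]; ring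
    _ = (∑ i ∈ Finset.range (m+1), (m.choose i : ℝ)) * (C₁ * C₂) * (1 + ‖x‖) ^ (k₁ + k₂) := by
        rw [← Finset.sum_mul]; ring_nf

lemma myTG.pow {f : W → ℝ} (hf : f.HasTemperateGrowth) (m : ℕ) :
    Function.HasTemperateGrowth (fun x => (f x) ^ m) := by
  induction m with
  | zero => simpa using Function.HasTemperateGrowth.const (1:ℝ)
  | succ k ih => simpa [pow_succ] using myTG.mul ih hf

lemma myTG.const_mul {f : W → ℝ} (hf : f.HasTemperateGrowth) (c : ℝ) :
    Function.HasTemperateGrowth (fun x => c * f x) :=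
  myTG.mul (Function.HasTemperateGrowth.const c) hf

end TG

variable {n : ℕ}

local notation "E" => EuclideanSpace ℝ (Fin n)

/-- Multiplication by a temperate-growth function, as a map on Schwartz space. -/
def aMul {a : E → ℝ} (ha : Function.HasTemperateGrowth a) :
    SchwartzMap E ℝ →L[ℝ] SchwartzMap E ℝ :=
  SchwartzMap.bilinLeftCLM (ContinuousLinearMap.mul ℝ ℝ) ha

/-- Directional derivative as a map on Schwartz space. -/
def pdS (i : Fin n) : SchwartzMap E ℝ →L[ℝ] SchwartzMap E ℝ :=
  (SchwartzMap.evalCLM ℝ E ℝ (EuclideanSpace.single i 1)).comp (SchwartzMap.fderivCLM ℝ E ℝ)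

lemma integrable_mulS (f g : SchwartzMap E ℝ) : Integrable (fun x => f x * g x) :=
  (g.integrable).bdd_mul f.continuous.aestronglyMeasurable
    (Filter.Eventually.of_forall fun x => by simpa using f.norm_le_seminorm ℝ x)

lemma ibp_dir {a : E → ℝ} (ha : Function.HasTemperateGrowth a) (f g : SchwartzMap E ℝ)
    (i : Fin n) :
    ∫ x, pd n i (fun y => f y * a y) x * g x = - ∫ x, (f x * a x) * pd n i (⇑g) x := by
  have hF : (fun y => f y * a y) = ⇑(aMul ha f) := rfl
  rw [hF]
  have key := integral_mul_fderiv_eq_neg_fderiv_mul_of_integrable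
    (μ := (volume : Measure E)) (f := ⇑(aMul ha f)) (g := ⇑g) (v := EuclideanSpace.single i 1)
    (integrable_mulS (pdS i (aMul ha f)) g) (integrable_mulS (aMul ha f) (pdS i g))
    (integrable_mulS (aMul ha f) g) (fun x _ => (aMul ha f).differentiableAt)
    (fun x _ => g.differentiableAt)
  have e1 : (∫ x, pd n i (⇑(aMul ha f)) x * g x)
      = ∫ x, fderiv ℝ (⇑(aMul ha f)) x (EuclideanSpace.single i 1) * g x := rfl
  have e2 : (∫ x, (f x * a x) * pd n i (⇑g) x)
      = ∫ x, (aMul ha f) x * fderiv ℝ (⇑g) x (EuclideanSpace.single i 1) := rfl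
  rw [e1, e2]
  linarith [key]

lemma inner_grad (f g : E → ℝ) (x : E) :
    (inner ℝ (grad n f x) (grad n g x) : ℝ) = ∑ i, pd n i f x * pd n i g x := by
  simp [grad, PiLp.inner_apply, RCLike.inner_apply, mul_comm]

lemma divg_eq_sum {a : E → ℝ} (ha : Function.HasTemperateGrowth a) (f : SchwartzMap E ℝ)
    (x : E) :
    divg n (fun y => a y • grad n (⇑f) y) x = ∑ i, (pdS i (aMul ha (pdS i f))) x := by
  refine Finset.sum_congr rfl fun i _ => ?_
  have h0 : (fun y => (WithLp.equiv 2 (Fin n → ℝ)) (a y • grad n (⇑f) y) i)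
      = fun y => (pdS i f) y * a y := funext fun y => mul_comm _ _
  rw [h0]; rfl

lemma integrable_div_mul {a : E → ℝ} (ha : Function.HasTemperateGrowth a)
    (f g : SchwartzMap E ℝ) :
    Integrable (fun x => divg n (fun y => a y • grad n (⇑f) y) x * g x) := by
  have h : (fun x => divg n (fun y => a y • grad n (⇑f) y) x * g x)
      = fun x => ∑ i, (pdS i (aMul ha (pdS i f))) x * g x := by
    funext x; rw [divg_eq_sum ha f x, Finset.sum_mul]
  rw [h]
  exact integrable_finset_sum _ fun i _ => integrable_mulS _ _

lemma integrable_aInner {a : E → ℝ} (ha : Function.HasTemperateGrowth a)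
    (f g : SchwartzMap E ℝ) :
    Integrable (fun x => a x * (inner ℝ (grad n (⇑f) x) (grad n (⇑g) x) : ℝ)) := by
  have h : (fun x => a x * (inner ℝ (grad n (⇑f) x) (grad n (⇑g) x) : ℝ))
      = fun x => ∑ i, (aMul ha (pdS i f)) x * (pdS i g) x := by
    funext x
    rw [inner_grad, Finset.mul_sum]
    exact Finset.sum_congr rfl fun i _ => by
      show a x * (pd n i (⇑f) x * pd n i (⇑g) x) = pd n i (⇑f) x * a x * pd n i (⇑g) x
      ring
  rw [h]
  exact integrable_finset_sum _ fun i _ => integrable_mulS _ _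

lemma myInt.add {f g : E → ℝ} (hf : Integrable f) (hg : Integrable g) :
    Integrable (fun x => f x + g x) := hf.add hg

lemma integrable_neg_div_mul {a : E → ℝ} (ha : Function.HasTemperateGrowth a)
    (f g : SchwartzMap E ℝ) :
    Integrable (fun x => -divg n (fun y => a y • grad n (⇑f) y) x * g x) := by
  have h : (fun x => -divg n (fun y => a y • grad n (⇑f) y) x * g x)
      = fun x => -(divg n (fun y => a y • grad n (⇑f) y) x * g x) :=
    funext fun x => neg_mul _ _
  rw [h]; exact (integrable_div_mul ha f g).neg

lemma divg_ibp {a : E → ℝ} (ha : Function.HasTemperateGrowth a) (f g : SchwartzMap E ℝ) :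
    ∫ x, divg n (fun y => a y • grad n (⇑f) y) x * g x
      = - ∫ x, a x * (inner ℝ (grad n (⇑f) x) (grad n (⇑g) x) : ℝ) := by
  calc ∫ x, divg n (fun y => a y • grad n (⇑f) y) x * g x
      = ∫ x, ∑ i, (pdS i (aMul ha (pdS i f))) x * g x := by
        congr 1; funext x; rw [divg_eq_sum ha f x, Finset.sum_mul]
    _ = ∑ i, ∫ x, (pdS i (aMul ha (pdS i f))) x * g x := by
        refine integral_finset_sum _ fun i _ => ?_
        exact integrable_mulS (pdS i (aMul ha (pdS i f))) g
    _ = ∑ i, - ∫ x, ((pdS i f) x * a x) * pd n i (⇑g) x :=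
        Finset.sum_congr rfl fun i _ => ibp_dir ha (pdS i f) g i
    _ = - ∑ i, ∫ x, ((pdS i f) x * a x) * pd n i (⇑g) x := by rw [← Finset.sum_neg_distrib]
    _ = - ∫ x, ∑ i, ((pdS i f) x * a x) * pd n i (⇑g) x := by
        congr 1
        exact (integral_finset_sum Finset.univ
          fun i _ => integrable_mulS (aMul ha (pdS i f)) (pdS i g)).symm
    _ = - ∫ x, a x * (inner ℝ (grad n (⇑f) x) (grad n (⇑g) x) : ℝ) := by
        congr 1
        refine integral_congr_ae (Filter.Eventually.of_forall fun x => ?_)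
        show ∑ i, ((pdS i) f) x * a x * pd n i (⇑g) x
          = a x * (inner ℝ (grad n (⇑f) x) (grad n (⇑g) x) : ℝ)
        rw [inner_grad, Finset.mul_sum]
        exact Finset.sum_congr rfl fun i _ => by
          show pd n i (⇑f) x * a x * pd n i (⇑g) x = _; ring

lemma neg_divg_ibp {a : E → ℝ} (ha : Function.HasTemperateGrowth a) (f g : SchwartzMap E ℝ) :
    ∫ x, -divg n (fun y => a y • grad n (⇑f) y) x * g x
      = ∫ x, a x * (inner ℝ (grad n (⇑f) x) (grad n (⇑g) x) : ℝ) := by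
  simp only [neg_mul]
  rw [integral_neg, divg_ibp ha f g, neg_neg]

lemma zint (δ w b : ℝ) (u v : E) :
    (∫ z in (0:ℝ)..b, (‖u + (δ^2*z^2) • v‖^2 + (2*δ*z*w)^2))
      = b * ‖u‖^2 + (2*δ^2*(inner ℝ u v : ℝ) + 4*δ^2*w^2) * (b^3/3)
        + (δ^4*‖v‖^2) * (b^5/5) := by
  have e : ∀ z : ℝ, ‖u + (δ^2*z^2) • v‖^2 + (2*δ*z*w)^2
      = ‖u‖^2 + (2*δ^2*(inner ℝ u v : ℝ) + 4*δ^2*w^2) * z^2 + (δ^4*‖v‖^2) * z^4 := by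
    intro z
    rw [norm_add_sq_real, real_inner_smul_right, norm_smul, Real.norm_eq_abs, mul_pow, sq_abs]
    ring
  rw [intervalIntegral.integral_congr (fun z _ => e z)]
  have i1 : IntervalIntegrable (fun _ : ℝ => ‖u‖^2) volume 0 b := intervalIntegrable_const
  have i2 : IntervalIntegrable
      (fun z : ℝ => (2*δ^2*(inner ℝ u v : ℝ) + 4*δ^2*w^2) * z^2) volume 0 b :=
    (Continuous.mul continuous_const (continuous_pow 2)).intervalIntegrable 0 b
  have i4 : IntervalIntegrable (fun z : ℝ => (δ^4*‖v‖^2) * z^4) volume 0 b :=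
    (Continuous.mul continuous_const (continuous_pow 4)).intervalIntegrable 0 b
  rw [intervalIntegral.integral_add (i1.add i2) i4, intervalIntegral.integral_add i1 i2,
    intervalIntegral.integral_const, intervalIntegral.integral_const_mul,
    intervalIntegral.integral_const_mul, integral_pow, integral_pow]
  simp
  ring

end Aux

/-- The bilinear identity
`⟨L₁₁ψ₀ + δ²L₁₂ψ₁, ψ₀⟩ + ⟨δ²L₁₂ψ₀ + δ²L₂₂ψ₁, ψ₁⟩
  = ∫ₓ∫₀^{H(x)} (|∇ψ₀ + δ²z²∇ψ₁|² + (2δzψ₁)²) dz dx`. -/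
theorem stmt3 (n : ℕ) (δ : ℝ) (hδ : 0 < δ)
    (H : EuclideanSpace ℝ (Fin n) → ℝ) (hH : ContDiff ℝ (⊤ : ℕ∞) H)
    (hHg : Function.HasTemperateGrowth H) (hHpos : ∀ x, 0 < H x)
    (ψ₀ ψ₁ : SchwartzMap (EuclideanSpace ℝ (Fin n)) ℝ) :
    (∫ x, (L11 n H ⇑ψ₀ x + δ^2 * L12 n H ⇑ψ₁ x) * ψ₀ x)
      + (∫ x, (δ^2 * L12 n H ⇑ψ₀ x + δ^2 * L22 n δ H ⇑ψ₁ x) * ψ₁ x)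
    = ∫ x, ∫ z in (0:ℝ)..(H x),
        (‖grad n ⇑ψ₀ x + (δ^2 * z^2) • grad n ⇑ψ₁ x‖^2 + (2*δ*z*ψ₁ x)^2) := by
  classical
  -- temperate growth of the coefficient functions
  have ha3 : Function.HasTemperateGrowth (fun y : EuclideanSpace ℝ (Fin n) => (1/3) * (H y)^3) :=
    myTG.const_mul (myTG.pow hHg 3) (1/3)
  have ha5 : Function.HasTemperateGrowth (fun y : EuclideanSpace ℝ (Fin n) => (1/5) * (H y)^5) :=
    myTG.const_mul (myTG.pow hHg 5) (1/5)
  have hc43 : Function.HasTemperateGrowth (fun y : EuclideanSpace ℝ (Fin n) => (4/3) * (H y)^3) :=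
    myTG.const_mul (myTG.pow hHg 3) (4/3)
  -- the five basic integrable pieces
  have int1 : Integrable (fun x => H x * (inner ℝ (grad n (⇑ψ₀) x) (grad n (⇑ψ₀) x) : ℝ)) :=
    integrable_aInner hHg ψ₀ ψ₀
  have int2 : Integrable (fun x =>
      ((1/3) * (H x)^3) * (inner ℝ (grad n (⇑ψ₁) x) (grad n (⇑ψ₀) x) : ℝ)) :=
    integrable_aInner ha3 ψ₁ ψ₀
  have int3 : Integrable (fun x =>
      ((1/3) * (H x)^3) * (inner ℝ (grad n (⇑ψ₀) x) (grad n (⇑ψ₁) x) : ℝ)) :=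
    integrable_aInner ha3 ψ₀ ψ₁
  have int4 : Integrable (fun x =>
      ((1/5) * (H x)^5) * (inner ℝ (grad n (⇑ψ₁) x) (grad n (⇑ψ₁) x) : ℝ)) :=
    integrable_aInner ha5 ψ₁ ψ₁
  have int5 : Integrable (fun x => ((4/3) * (H x)^3) * ψ₁ x * ψ₁ x) := by
    have h : (fun x => ((4/3) * (H x)^3) * ψ₁ x * ψ₁ x)
        = fun x => (aMul hc43 ψ₁) x * ψ₁ x := by
      funext x
      show (4/3) * (H x)^3 * ψ₁ x * ψ₁ x = ψ₁ x * ((4/3) * (H x)^3) * ψ₁ x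
      ring
    rw [h]; exact integrable_mulS _ _
  -- first integral
  have h1 : (∫ x, (L11 n H ⇑ψ₀ x + δ^2 * L12 n H ⇑ψ₁ x) * ψ₀ x)
      = (∫ x, H x * (inner ℝ (grad n (⇑ψ₀) x) (grad n (⇑ψ₀) x) : ℝ))
        + δ^2 * ∫ x, ((1/3) * (H x)^3) * (inner ℝ (grad n (⇑ψ₁) x) (grad n (⇑ψ₀) x) : ℝ) := by
    have e : ∀ x, (L11 n H ⇑ψ₀ x + δ^2 * L12 n H ⇑ψ₁ x) * ψ₀ x
        = -divg n (fun y => H y • grad n (⇑ψ₀) y) x * ψ₀ x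
          + δ^2 * (-divg n (fun y => ((1/3) * (H y)^3) • grad n (⇑ψ₁) y) x * ψ₀ x) := by
      intro x; simp only [L11, L12]; ring
    calc (∫ x, (L11 n H ⇑ψ₀ x + δ^2 * L12 n H ⇑ψ₁ x) * ψ₀ x)
        = ∫ x, (-divg n (fun y => H y • grad n (⇑ψ₀) y) x * ψ₀ x
          + δ^2 * (-divg n (fun y => ((1/3) * (H y)^3) • grad n (⇑ψ₁) y) x * ψ₀ x)) := by
          simp only [e]
      _ = (∫ x, -divg n (fun y => H y • grad n (⇑ψ₀) y) x * ψ₀ x)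
          + ∫ x, δ^2 * (-divg n (fun y => ((1/3) * (H y)^3) • grad n (⇑ψ₁) y) x * ψ₀ x) := by
          exact integral_add (integrable_neg_div_mul hHg ψ₀ ψ₀)
            ((integrable_neg_div_mul ha3 ψ₁ ψ₀).const_mul _)
      _ = _ := by
          rw [integral_const_mul, neg_divg_ibp hHg ψ₀ ψ₀, neg_divg_ibp ha3 ψ₁ ψ₀]
  -- second integral
  have h2 : (∫ x, (δ^2 * L12 n H ⇑ψ₀ x + δ^2 * L22 n δ H ⇑ψ₁ x) * ψ₁ x)
      = δ^2 * (∫ x, ((1/3) * (H x)^3) * (inner ℝ (grad n (⇑ψ₀) x) (grad n (⇑ψ₁) x) : ℝ))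
        + (δ^4 * (∫ x, ((1/5) * (H x)^5) * (inner ℝ (grad n (⇑ψ₁) x) (grad n (⇑ψ₁) x) : ℝ))
        + δ^2 * ∫ x, ((4/3) * (H x)^3) * ψ₁ x * ψ₁ x) := by
    have e : ∀ x, (δ^2 * L12 n H ⇑ψ₀ x + δ^2 * L22 n δ H ⇑ψ₁ x) * ψ₁ x
        = δ^2 * (-divg n (fun y => ((1/3) * (H y)^3) • grad n (⇑ψ₀) y) x * ψ₁ x)
          + (δ^4 * (-divg n (fun y => ((1/5) * (H y)^5) • grad n (⇑ψ₁) y) x * ψ₁ x)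
          + δ^2 * (((4/3) * (H x)^3) * ψ₁ x * ψ₁ x)) := by
      intro x; simp only [L12, L22]; ring
    have I2 := integrable_neg_div_mul ha3 ψ₀ ψ₁
    have I4 := integrable_neg_div_mul ha5 ψ₁ ψ₁
    calc (∫ x, (δ^2 * L12 n H ⇑ψ₀ x + δ^2 * L22 n δ H ⇑ψ₁ x) * ψ₁ x)
        = ∫ x, (δ^2 * (-divg n (fun y => ((1/3) * (H y)^3) • grad n (⇑ψ₀) y) x * ψ₁ x)
          + (δ^4 * (-divg n (fun y => ((1/5) * (H y)^5) • grad n (⇑ψ₁) y) x * ψ₁ x)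
          + δ^2 * (((4/3) * (H x)^3) * ψ₁ x * ψ₁ x))) := by
          simp only [e]
      _ = (∫ x, δ^2 * (-divg n (fun y => ((1/3) * (H y)^3) • grad n (⇑ψ₀) y) x * ψ₁ x))
          + ((∫ x, δ^4 * (-divg n (fun y => ((1/5) * (H y)^5) • grad n (⇑ψ₁) y) x * ψ₁ x))
          + ∫ x, δ^2 * (((4/3) * (H x)^3) * ψ₁ x * ψ₁ x)) := by
          rw [integral_add (I2.const_mul _) (myInt.add (I4.const_mul _) (int5.const_mul _)),
            integral_add (I4.const_mul _) (int5.const_mul _)]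
      _ = _ := by
          rw [integral_const_mul, integral_const_mul, integral_const_mul,
            neg_divg_ibp ha3 ψ₀ ψ₁, neg_divg_ibp ha5 ψ₁ ψ₁]
  -- right-hand side, pointwise in x
  have h3 : ∀ x : EuclideanSpace ℝ (Fin n), (∫ z in (0:ℝ)..(H x),
        (‖grad n (⇑ψ₀) x + (δ^2 * z^2) • grad n (⇑ψ₁) x‖^2 + (2*δ*z*ψ₁ x)^2))
      = H x * (inner ℝ (grad n (⇑ψ₀) x) (grad n (⇑ψ₀) x) : ℝ)
        + (δ^2 * (((1/3) * (H x)^3) * (inner ℝ (grad n (⇑ψ₁) x) (grad n (⇑ψ₀) x) : ℝ))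
        + (δ^2 * (((1/3) * (H x)^3) * (inner ℝ (grad n (⇑ψ₀) x) (grad n (⇑ψ₁) x) : ℝ))
        + (δ^4 * (((1/5) * (H x)^5) * (inner ℝ (grad n (⇑ψ₁) x) (grad n (⇑ψ₁) x) : ℝ))
        + δ^2 * (((4/3) * (H x)^3) * ψ₁ x * ψ₁ x)))) := by
    intro x
    rw [zint δ (ψ₁ x) (H x) (grad n (⇑ψ₀) x) (grad n (⇑ψ₁) x)]
    have n0 : ‖grad n (⇑ψ₀) x‖^2 = (inner ℝ (grad n (⇑ψ₀) x) (grad n (⇑ψ₀) x) : ℝ) :=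
      (real_inner_self_eq_norm_sq _).symm
    have n1 : ‖grad n (⇑ψ₁) x‖^2 = (inner ℝ (grad n (⇑ψ₁) x) (grad n (⇑ψ₁) x) : ℝ) :=
      (real_inner_self_eq_norm_sq _).symm
    have sym : (inner ℝ (grad n (⇑ψ₀) x) (grad n (⇑ψ₁) x) : ℝ)
        = (inner ℝ (grad n (⇑ψ₁) x) (grad n (⇑ψ₀) x) : ℝ) := real_inner_comm _ _
    rw [n0, n1, sym]
    ring
  -- split the right-hand side
  have hR : (∫ x, ∫ z in (0:ℝ)..(H x),
        (‖grad n (⇑ψ₀) x + (δ^2 * z^2) • grad n (⇑ψ₁) x‖^2 + (2*δ*z*ψ₁ x)^2))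
      = (∫ x, H x * (inner ℝ (grad n (⇑ψ₀) x) (grad n (⇑ψ₀) x) : ℝ))
        + (δ^2 * (∫ x, ((1/3) * (H x)^3) * (inner ℝ (grad n (⇑ψ₁) x) (grad n (⇑ψ₀) x) : ℝ))
        + (δ^2 * (∫ x, ((1/3) * (H x)^3) * (inner ℝ (grad n (⇑ψ₀) x) (grad n (⇑ψ₁) x) : ℝ))
        + (δ^4 * (∫ x, ((1/5) * (H x)^5) * (inner ℝ (grad n (⇑ψ₁) x) (grad n (⇑ψ₁) x) : ℝ))
        + δ^2 * ∫ x, ((4/3) * (H x)^3) * ψ₁ x * ψ₁ x))) := by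
    calc (∫ x, ∫ z in (0:ℝ)..(H x),
        (‖grad n (⇑ψ₀) x + (δ^2 * z^2) • grad n (⇑ψ₁) x‖^2 + (2*δ*z*ψ₁ x)^2))
        = ∫ x, (H x * (inner ℝ (grad n (⇑ψ₀) x) (grad n (⇑ψ₀) x) : ℝ)
        + (δ^2 * (((1/3) * (H x)^3) * (inner ℝ (grad n (⇑ψ₁) x) (grad n (⇑ψ₀) x) : ℝ))
        + (δ^2 * (((1/3) * (H x)^3) * (inner ℝ (grad n (⇑ψ₀) x) (grad n (⇑ψ₁) x) : ℝ))
        + (δ^4 * (((1/5) * (H x)^5) * (inner ℝ (grad n (⇑ψ₁) x) (grad n (⇑ψ₁) x) : ℝ))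
        + δ^2 * (((4/3) * (H x)^3) * ψ₁ x * ψ₁ x))))) := by
          simp only [h3]
      _ = _ := by
          rw [integral_add int1 (myInt.add (int2.const_mul _) (myInt.add (int3.const_mul _)
              (myInt.add (int4.const_mul _) (int5.const_mul _)))),
            integral_add (int2.const_mul _) (myInt.add (int3.const_mul _)
              (myInt.add (int4.const_mul _) (int5.const_mul _))),
            integral_add (int3.const_mul _) (myInt.add (int4.const_mul _) (int5.const_mul _)),
            integral_add (int4.const_mul _) (int5.const_mul _),
            integral_const_mul, integral_const_mul, integral_const_mul, integral_const_mul]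
  rw [h1, h2, hR]
  ring
end
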